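/- Let N, d ≥ 1, B > 0, ε ≥ 0, τ ≥ 1 a natural number, and θ* ∈ ℝ^d. Let θ_1,…,θ_N ∈ ℝ^d with average θ̄ = (1/N)∑_i θ_i and consensus error S = ∑_i ‖θ_i − θ̄‖², and let θ'_1,…,θ'_N ∈ ℝ^d with average θ̄' and consensus error S' = ∑_i ‖θ'_i − θ̄'‖². Assume ‖θ̄ − θ̄'‖ ≤ 3εBτ(‖θ̄‖ + √(S') + 1), and let g_1,…,g_N, h_1,…,h_N ∈ ℝ^d satisfy ‖g_i‖ ≤ B(‖θ_i‖+1) and ‖h_i‖ ≤ B(‖θ̄‖+1) for all i. Then ⟨θ̄ − θ̄', ∑_{i=1}^N (g_i − h_i)⟩ ≤ 30 ετ B² ( N‖θ̄ − θ*‖² + N S' + S + N(‖θ*‖² + 1) ). -/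

import Mathlib

/-- Euclidean norm of a vector in `ℝ^d` given as a plain function. -/
noncomputable def enorm' {d : ℕ} (v : Fin d → ℝ) : ℝ :=
  ‖(WithLp.equiv 2 (Fin d → ℝ)).symm v‖

/-- Euclidean inner product of two vectors in `ℝ^d` given as plain functions. -/
noncomputable def edot {d : ℕ} (u v : Fin d → ℝ) : ℝ :=
  inner ℝ ((WithLp.equiv 2 (Fin d → ℝ)).symm u) ((WithLp.equiv 2 (Fin d → ℝ)).symm v)

/-! After Cauchy–Schwarz, every summand of `∑ (gᵢ - hᵢ)` is bounded by
`B (‖θᵢ - θ̄‖ + 2 (‖θ̄‖ + 1))`, and the drift bound turns the product with `‖θ̄ - θ̄'‖` into a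
sum of per-node products `(‖θ̄‖ + 1 + √S') (‖θᵢ - θ̄‖ + 2 (‖θ̄‖ + 1))`. Each of them is at most
`10 (‖θ̄ - θ*‖² + S' + ‖θᵢ - θ̄‖² + ‖θ*‖² + 1)` by AM-GM, using `‖θ̄‖ ≤ ‖θ̄ - θ*‖ + ‖θ*‖`;
summing over the nodes gives the claim. -/

open Finset

lemma add_add_one_mul_le {a t r p q : ℝ} (hp : 0 ≤ p) (hq : 0 ≤ q) (ha : 0 ≤ a) (hapq : a ≤ p + q) :
    (a + t + 1) * (r + 2 * (a + 1)) ≤ 10 * (p ^ 2 + t ^ 2 + r ^ 2 + (q ^ 2 + 1)) := by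
  have hsq : (a + 1) ^ 2 ≤ 3 * (p ^ 2 + q ^ 2 + 1) := by
    nlinarith [sq_nonneg (p - q), sq_nonneg (p - 1), sq_nonneg (q - 1)]
  -- AM-GM on `(a+1) r`, `t r` and `2 (a+1) t`
  nlinarith [sq_nonneg (a + 1 - r / 2), sq_nonneg (t - r / 2), sq_nonneg ((a + 1) / 2 - 2 * t)]

lemma norm_add_norm_le_of_linear_growth {E : Type*} [SeminormedAddCommGroup E] {B : ℝ}
    {c θ g h : E} (hB : 0 ≤ B) (hg : ‖g‖ ≤ B * (‖θ‖ + 1)) (hh : ‖h‖ ≤ B * (‖c‖ + 1)) :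
    ‖g‖ + ‖h‖ ≤ B * (‖θ - c‖ + 2 * (‖c‖ + 1)) := by
  have := mul_le_mul_of_nonneg_left (norm_le_norm_add_norm_sub' θ c) hB
  linarith

section InnerProductSpace

variable {E : Type*} [NormedAddCommGroup E] [InnerProductSpace ℝ E] {ι : Type*}

lemma inner_sum_sub_le_sum_mul (s : Finset ι) (x : E) (g h : ι → E) :
    inner ℝ x (∑ i ∈ s, (g i - h i)) ≤ ∑ i ∈ s, ‖x‖ * (‖g i‖ + ‖h i‖) := by
  rw [← mul_sum]
  refine (real_inner_le_norm _ _).trans (mul_le_mul_of_nonneg_left ?_ (norm_nonneg x))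
  exact (norm_sum_le _ _).trans (sum_le_sum fun i _ => norm_sub_le _ _)

theorem inner_sum_sub_le_of_norm_le (s : Finset ι) {B K t : ℝ} (hB : 0 ≤ B) (hK : 0 ≤ K)
    {x c c₀ : E} (θ g h : ι → E) (hx : ‖x‖ ≤ K * (‖c‖ + t + 1))
    (hg : ∀ i, ‖g i‖ ≤ B * (‖θ i‖ + 1)) (hh : ∀ i, ‖h i‖ ≤ B * (‖c‖ + 1)) :
    inner ℝ x (∑ i ∈ s, (g i - h i))
      ≤ 10 * K * B * (#s * ‖c - c₀‖ ^ 2 + #s * t ^ 2 + ∑ i ∈ s, ‖θ i - c‖ ^ 2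
          + #s * (‖c₀‖ ^ 2 + 1)) := by
  have hc : ‖c‖ ≤ ‖c - c₀‖ + ‖c₀‖ := by
    simpa [add_comm] using norm_le_norm_add_norm_sub' c c₀
  calc inner ℝ x (∑ i ∈ s, (g i - h i))
      ≤ ∑ i ∈ s, ‖x‖ * (‖g i‖ + ‖h i‖) := inner_sum_sub_le_sum_mul s x g h
    _ ≤ ∑ i ∈ s, K * B * ((‖c‖ + t + 1) * (‖θ i - c‖ + 2 * (‖c‖ + 1))) := by
        refine sum_le_sum fun i _ => ?_
        have hK' : 0 ≤ K * (‖c‖ + t + 1) := (norm_nonneg x).trans hx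
        have := mul_le_mul hx (norm_add_norm_le_of_linear_growth hB (hg i) (hh i))
          (by positivity) hK'
        linarith
    _ ≤ ∑ i ∈ s, 10 * K * B * (‖c - c₀‖ ^ 2 + t ^ 2 + ‖θ i - c‖ ^ 2 + (‖c₀‖ ^ 2 + 1)) :=
        sum_le_sum fun i _ => by
          have := add_add_one_mul_le (t := t) (r := ‖θ i - c‖) (norm_nonneg (c - c₀))
            (norm_nonneg c₀) (norm_nonneg c) hc
          nlinarith [mul_nonneg hK hB]
    _ = 10 * K * B * (#s * ‖c - c₀‖ ^ 2 + #s * t ^ 2 + ∑ i ∈ s, ‖θ i - c‖ ^ 2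
          + #s * (‖c₀‖ ^ 2 + 1)) := by
        simp only [← mul_sum, sum_add_distrib, sum_const, nsmul_eq_mul, mul_add]

end InnerProductSpace

theorem drift_cross_term_bound_general (N d : ℕ)
    (B ε : ℝ) (hB : 0 < B) (hε : 0 ≤ ε) (τ : ℕ)
    (θstar : Fin d → ℝ)
    (θ θ' : Fin N → Fin d → ℝ)
    (θbar : Fin d → ℝ)
    (θbar' : Fin d → ℝ)
    (S : ℝ) (hS : S = ∑ i, (enorm' (fun j => θ i j - θbar j)) ^ 2)
    (S' : ℝ) (hS' : S' = ∑ i, (enorm' (fun j => θ' i j - θbar' j)) ^ 2)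
    (hdrift : enorm' (θbar - θbar') ≤ 3 * ε * B * τ * (enorm' θbar + Real.sqrt S' + 1))
    (g h : Fin N → Fin d → ℝ)
    (hg : ∀ i, enorm' (g i) ≤ B * (enorm' (θ i) + 1))
    (hh : ∀ i, enorm' (h i) ≤ B * (enorm' θbar + 1)) :
    edot (θbar - θbar') (∑ i, (g i - h i))
      ≤ 30 * ε * τ * B ^ 2 *
          (N * (enorm' (θbar - θstar)) ^ 2 + N * S' + S
            + N * ((enorm' θstar) ^ 2 + 1)) := by
  have hS'0 : 0 ≤ S' := hS' ▸ by positivity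
  have hS₂ : S = ∑ i, ‖WithLp.toLp 2 (θ i) - WithLp.toLp 2 θbar‖ ^ 2 := hS
  have key := inner_sum_sub_le_of_norm_le (E := EuclideanSpace ℝ (Fin d)) univ hB.le
    (by positivity : 0 ≤ 3 * ε * B * τ) (c₀ := WithLp.toLp 2 θstar)
    (fun i => WithLp.toLp 2 (θ i)) (fun i => WithLp.toLp 2 (g i)) (fun i => WithLp.toLp 2 (h i))
    hdrift hg hh
  rw [Real.sq_sqrt hS'0] at key
  convert key using 1
  · simp [edot]
  · simp only [hS₂, enorm', card_univ, Fintype.card_fin, WithLp.equiv_symm_apply, WithLp.toLp_sub]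
    ring

/-- Bound on the drift cross term `T₁`:
`⟨θ̄ − θ̄', ∑ (gᵢ − hᵢ)⟩ ≤ 30 ετ B² (N‖θ̄ − θ*‖² + N S' + S + N(‖θ*‖² + 1))`. -/
theorem drift_cross_term_bound (N d : ℕ) (hN : 1 ≤ N) (hd : 1 ≤ d)
    (B ε : ℝ) (hB : 0 < B) (hε : 0 ≤ ε) (τ : ℕ) (hτ : 1 ≤ τ)
    (θstar : Fin d → ℝ)
    (θ θ' : Fin N → Fin d → ℝ)
    (θbar : Fin d → ℝ) (hθbar : θbar = fun j => (N : ℝ)⁻¹ * ∑ i, θ i j)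
    (θbar' : Fin d → ℝ) (hθbar' : θbar' = fun j => (N : ℝ)⁻¹ * ∑ i, θ' i j)
    (S : ℝ) (hS : S = ∑ i, (enorm' (fun j => θ i j - θbar j)) ^ 2)
    (S' : ℝ) (hS' : S' = ∑ i, (enorm' (fun j => θ' i j - θbar' j)) ^ 2)
    (hdrift : enorm' (θbar - θbar') ≤ 3 * ε * B * τ * (enorm' θbar + Real.sqrt S' + 1))
    (g h : Fin N → Fin d → ℝ)
    (hg : ∀ i, enorm' (g i) ≤ B * (enorm' (θ i) + 1))
    (hh : ∀ i, enorm' (h i) ≤ B * (enorm' θbar + 1)) :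
    edot (θbar - θbar') (∑ i, (g i - h i))
      ≤ 30 * ε * τ * B ^ 2 *
          (N * (enorm' (θbar - θstar)) ^ 2 + N * S' + S
            + N * ((enorm' θstar) ^ 2 + 1)) :=
  drift_cross_term_bound_general N d B ε hB hε τ θstar θ θ' θbar θbar' S hS S' hS' hdrift g h hg hh
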